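/- Let f̃ ∈ K[x₁,…,x_n] and b̃ ∈ (K*)ⁿ with b_j = o(b̃_j), γ_j = pc(b̃_j), and b = (b₁,…,b_n). If f̃_b(γ₁,…,γ_n) ≠ 0, then o(f̃(b̃)) = f(b) and pc(f̃(b̃)) = f̃_b(γ₁,…,γ_n); in particular f̃(b̃) ≠ 0. -/

import Mathlib

/-!
Write `f(x) = ∑ aᵢ xⁱ`. Each term `aᵢ xⁱ` has order `o(aᵢ) + i·b` and leading coefficient
`pc(aᵢ) γⁱ`, so all terms have order at least `f(b)`, and the coefficient of `t^{f(b)}` in `f(x)`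
is the sum of the leading coefficients of the terms of minimal order, which is `f̃_b(γ)`.
If it is nonzero, nothing cancels in degree `f(b)`: this is the order of `f(x)`, and `f̃_b(γ)`
its principal coefficient.
-/

noncomputable section

/-- The field of (generalized) Puiseux series over `ℂ`, modeled as Hahn series
with value group `ℚ` and coefficients in `ℂ`. -/
abbrev K : Type := HahnSeries ℚ ℂ

/-- The principal coefficient of a Puiseux series. -/
def pc (a : K) : ℂ := a.coeff a.order

/-- The weight of the multi-index `i` of `f` at the point `b`:
`o(a_i) + i·b`. -/
def wt {n : ℕ} (f : MvPolynomial (Fin n) K) (b : Fin n → ℚ) (i : Fin n →₀ ℕ) : ℚ :=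
  (f.coeff i).order + ∑ j, (i j : ℚ) * b j

/-- The tropicalization `f(b) = min_{i ∈ supp f} (o(a_i) + i·b)`, with value `⊤`
for the zero polynomial. -/
def trop {n : ℕ} (f : MvPolynomial (Fin n) K) (b : Fin n → ℚ) : WithTop ℚ :=
  f.support.inf fun i => (wt f b i : WithTop ℚ)

/-- The tropical hypersurface `𝒯(f)`: points where the minimum is attained at
least twice. -/
def tropSet {n : ℕ} (f : MvPolynomial (Fin n) K) : Set (Fin n → ℚ) :=
  {b | ∃ i ∈ f.support, ∃ j ∈ f.support, i ≠ j ∧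
    (wt f b i : WithTop ℚ) = trop f b ∧ (wt f b j : WithTop ℚ) = trop f b}

/-- The initial form `f̃_b ∈ ℂ[x]` of `f` at `b`. -/
def initForm {n : ℕ} (f : MvPolynomial (Fin n) K) (b : Fin n → ℚ) :
    MvPolynomial (Fin n) ℂ :=
  ∑ i ∈ f.support.filter fun i => (wt f b i : WithTop ℚ) = trop f b,
    MvPolynomial.monomial i (pc (f.coeff i))

namespace HahnSeries

variable {Γ R ι : Type*}

section Sum

variable [LinearOrder Γ] [AddCommMonoid R] {s : Finset ι} {g : ι → R⟦Γ⟧}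

theorem coeff_eq_leadingCoeff_of_orderTop_eq {x : R⟦Γ⟧} {m : Γ} (h : x.orderTop = m) :
    x.coeff m = x.leadingCoeff := by
  rw [← coeff_untop_eq_leadingCoeff (by simp [h]), (WithTop.untop_eq_iff _).mpr h]

theorem le_orderTop_sum {m : WithTop Γ} (h : ∀ i ∈ s, m ≤ (g i).orderTop) :
    m ≤ (∑ i ∈ s, g i).orderTop :=
  le_orderTop_iff_forall.mpr fun _ hj => by
    rw [coeff_sum]
    exact Finset.sum_eq_zero fun i hi => coeff_eq_zero_of_lt_orderTop (hj.trans_le (h i hi))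

theorem coeff_sum_eq_sum_leadingCoeff {m : Γ} (h : ∀ i ∈ s, (m : WithTop Γ) ≤ (g i).orderTop) :
    (∑ i ∈ s, g i).coeff m = ∑ i ∈ s with (g i).orderTop = m, (g i).leadingCoeff := by
  rw [coeff_sum, Finset.sum_filter]
  refine Finset.sum_congr rfl fun i hi => ?_
  split_ifs with him
  · exact coeff_eq_leadingCoeff_of_orderTop_eq him
  · exact coeff_eq_zero_of_lt_orderTop ((h i hi).lt_of_ne' him)

theorem orderTop_sum_eq_of_sum_leadingCoeff_ne_zero {m : Γ}
    (h : ∀ i ∈ s, (m : WithTop Γ) ≤ (g i).orderTop)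
    (hm : ∑ i ∈ s with (g i).orderTop = m, (g i).leadingCoeff ≠ 0) :
    (∑ i ∈ s, g i).orderTop = m :=
  le_antisymm (orderTop_le_of_coeff_ne_zero (coeff_sum_eq_sum_leadingCoeff h ▸ hm))
    (le_orderTop_sum h)

theorem leadingCoeff_sum_eq_of_sum_leadingCoeff_ne_zero {m : Γ}
    (h : ∀ i ∈ s, (m : WithTop Γ) ≤ (g i).orderTop)
    (hm : ∑ i ∈ s with (g i).orderTop = m, (g i).leadingCoeff ≠ 0) :
    (∑ i ∈ s, g i).leadingCoeff = ∑ i ∈ s with (g i).orderTop = m, (g i).leadingCoeff := by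
  rw [← coeff_eq_leadingCoeff_of_orderTop_eq (orderTop_sum_eq_of_sum_leadingCoeff_ne_zero h hm),
    coeff_sum_eq_sum_leadingCoeff h]

end Sum

section Prod

variable [AddCommMonoid Γ] [LinearOrder Γ] [IsOrderedCancelAddMonoid Γ]
  [CommSemiring R] [NoZeroDivisors R]

theorem leadingCoeff_pow (x : R⟦Γ⟧) (k : ℕ) : (x ^ k).leadingCoeff = x.leadingCoeff ^ k := by
  induction k with
  | zero => simp
  | succ k ih => rw [pow_succ, leadingCoeff_mul, ih, pow_succ]

theorem leadingCoeff_prod (s : Finset ι) (g : ι → R⟦Γ⟧) :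
    (∏ i ∈ s, g i).leadingCoeff = ∏ i ∈ s, (g i).leadingCoeff := by
  classical
  induction s using Finset.induction_on with
  | empty => simp
  | insert a s ha ih => rw [Finset.prod_insert ha, Finset.prod_insert ha, leadingCoeff_mul, ih]

variable [Nontrivial R]

theorem orderTop_pow (x : R⟦Γ⟧) (k : ℕ) : (x ^ k).orderTop = k • x.orderTop := by
  induction k with
  | zero => simp
  | succ k ih => rw [pow_succ, orderTop_mul, ih, succ_nsmul]

theorem orderTop_prod (s : Finset ι) (g : ι → R⟦Γ⟧) :
    (∏ i ∈ s, g i).orderTop = ∑ i ∈ s, (g i).orderTop := by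
  classical
  induction s using Finset.induction_on with
  | empty => simp
  | insert a s ha ih => rw [Finset.prod_insert ha, Finset.sum_insert ha, orderTop_mul, ih]

end Prod

end HahnSeries

open HahnSeries MvPolynomial

theorem pc_eq_leadingCoeff (a : K) : pc a = a.leadingCoeff :=
  leadingCoeff_eq.symm

section Tropical

variable {n : ℕ} {f : MvPolynomial (Fin n) K}

theorem trop_eq_top_iff {b : Fin n → ℚ} : trop f b = ⊤ ↔ f = 0 := by
  simp [trop, MvPolynomial.ext_iff]

theorem eval_initForm (b : Fin n → ℚ) (γ : Fin n → ℂ) :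
    eval γ (initForm f b) = ∑ i ∈ f.support with (wt f b i : WithTop ℚ) = trop f b,
      pc (f.coeff i) * ∏ j, γ j ^ i j := by
  rw [initForm, map_sum]
  exact Finset.sum_congr rfl fun i _ => by rw [eval_monomial, Finsupp.prod_pow]

theorem orderTop_coeff_mul_prod_pow {x : Fin n → K} (hx : ∀ j, x j ≠ 0) {i : Fin n →₀ ℕ}
    (hi : i ∈ f.support) :
    (f.coeff i * ∏ j, x j ^ i j).orderTop = wt f (fun j => (x j).order) i := by
  simp only [orderTop_mul, orderTop_prod, orderTop_pow, wt, ← nsmul_eq_mul,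
    ← order_eq_orderTop_of_ne_zero (mem_support_iff.mp hi), ← order_eq_orderTop_of_ne_zero (hx _)]
  norm_cast

theorem leadingCoeff_coeff_mul_prod_pow (x : Fin n → K) (i : Fin n →₀ ℕ) :
    (f.coeff i * ∏ j, x j ^ i j).leadingCoeff = pc (f.coeff i) * ∏ j, pc (x j) ^ i j := by
  simp only [leadingCoeff_mul, leadingCoeff_prod, leadingCoeff_pow, pc_eq_leadingCoeff]

end Tropical

/-- If the initial form of `f` at the vector of orders `b` of `x ∈ (K*)ⁿ` does
not vanish at the vector of principal coefficients `γ`, then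
`o(f(x)) = f(b)` and `pc(f(x)) = f̃_b(γ)`; in particular `f(x) ≠ 0`. -/
theorem order_and_pc_of_eval (n : ℕ) (f : MvPolynomial (Fin n) K)
    (x : Fin n → K) (hx : ∀ j, x j ≠ 0)
    (h : MvPolynomial.eval (fun j => pc (x j))
        (initForm f fun j => (x j).order) ≠ 0) :
    (MvPolynomial.eval x f).orderTop = trop f (fun j => (x j).order) ∧
      MvPolynomial.eval x f ≠ 0 ∧
      pc (MvPolynomial.eval x f) =
        MvPolynomial.eval (fun j => pc (x j))
          (initForm f fun j => (x j).order) := by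
  set b : Fin n → ℚ := fun j => (x j).order
  have hf : f ≠ 0 := by
    rintro rfl
    simp [initForm] at h
  obtain ⟨m, hm⟩ := WithTop.ne_top_iff_exists.mp (trop_eq_top_iff.not.mpr hf)
  have hle : ∀ i ∈ f.support, (m : WithTop ℚ) ≤ (f.coeff i * ∏ j, x j ^ i j).orderTop :=
    fun i hi => by rw [orderTop_coeff_mul_prod_pow hx hi, hm]; exact Finset.inf_le hi
  have hinit : ∑ i ∈ f.support with (f.coeff i * ∏ j, x j ^ i j).orderTop = m,
      (f.coeff i * ∏ j, x j ^ i j).leadingCoeff = eval (fun j => pc (x j)) (initForm f b) := by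
    rw [eval_initForm]
    exact Finset.sum_congr (Finset.filter_congr fun i hi => by
      rw [orderTop_coeff_mul_prod_pow hx hi, hm]) fun i _ => leadingCoeff_coeff_mul_prod_pow x i
  rw [← hinit] at h ⊢
  have hord := orderTop_sum_eq_of_sum_leadingCoeff_ne_zero hle h
  rw [eval_eq', hord, ← hm, pc_eq_leadingCoeff,
    leadingCoeff_sum_eq_of_sum_leadingCoeff_ne_zero hle h]
  exact ⟨rfl, orderTop_ne_top.mp (hord ▸ WithTop.coe_ne_top), rfl⟩

end
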